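/- On the boundary of the cusp Ω_{1,α} (i.e. where |x₂| = ½e^{−1/x₁^α}, x₁ > 0), the x₁-derivative of b_α computed from inside Ω_{1,α} equals α e^{−1/x₁^α}((3/4)x₁^{−1} + (5/4)x₁^{α−1}), which is nonnegative; moreover b_α < (5/4)2^{−α}e^{−2^α} in Ω_{1,α} ∩ Ω. -/

import Mathlib

open Real

/-!
On a horizontal slice, `B` is a combination of the functions `t ↦ t ^ α * exp (c / t ^ α)`,
whose derivative is `α e^{c/x^α} (x^{α-1} - c/x)`. On the boundary of the cusp,
`x₂² = ¼ e^{-2/x₁^α}` turns the `c = 1` term into a quarter of a `c = -1` term, which gives the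
formula. Inside the cusp the same substitution bounds `B` by `(5/4) x₁^α e^{-1/x₁^α}`, and since
`s ↦ s e^{-1/s}` is increasing it remains to evaluate at `x₁^α = 2^{-α}`.
-/

noncomputable def cuspBarrier (α : ℝ) (p : ℝ × ℝ) : ℝ :=
  p.1 ^ α * exp (-1 / p.1 ^ α) + p.1 ^ α * exp (1 / p.1 ^ α) * p.2 ^ 2

theorem hasDerivAt_rpow_mul_exp_div_rpow {α x : ℝ} (c : ℝ) (hx : 0 < x) :
    HasDerivAt (fun t => t ^ α * exp (c / t ^ α))
      (α * exp (c / x ^ α) * (x ^ (α - 1) - c * x⁻¹)) x := by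
  have hxα : 0 < x ^ α := rpow_pos_of_pos hx α
  have hpow : HasDerivAt (fun t => t ^ α) (α * x ^ (α - 1)) x := by
    simpa using hasDerivAt_rpow_const (p := α) (Or.inl hx.ne')
  refine (hpow.mul ((hasDerivAt_const x c).div hpow hxα.ne').exp).congr_deriv ?_
  rw [Pi.div_apply, rpow_sub hx, rpow_one]
  field_simp
  ring

theorem fderiv_apply_one_zero_of_hasDerivAt {𝕜 F : Type*} [NontriviallyNormedField 𝕜]
    [NormedAddCommGroup F] [NormedSpace 𝕜 F] {f : 𝕜 × 𝕜 → F} {p : 𝕜 × 𝕜} {d : F}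
    (hf : DifferentiableAt 𝕜 f p) (hd : HasDerivAt (fun t => f (t, p.2)) d p.1) :
    fderiv 𝕜 f p (1, 0) = d :=
  (hf.hasFDerivAt.comp_hasDerivAt p.1
    ((hasDerivAt_id p.1).prodMk (hasDerivAt_const p.1 p.2))).unique hd

section
variable {α : ℝ} {p : ℝ × ℝ}

theorem hasDerivAt_cuspBarrier_fst (hx : 0 < p.1) :
    HasDerivAt (fun t => cuspBarrier α (t, p.2))
      (α * exp (-1 / p.1 ^ α) * (p.1 ^ (α - 1) + p.1⁻¹) +
        α * exp (1 / p.1 ^ α) * (p.1 ^ (α - 1) - p.1⁻¹) * p.2 ^ 2) p.1 := by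
  have h := (hasDerivAt_rpow_mul_exp_div_rpow (α := α) (-1) hx).add
    ((hasDerivAt_rpow_mul_exp_div_rpow (α := α) 1 hx).mul_const (p.2 ^ 2))
  exact h.congr_deriv (by ring)

theorem differentiableAt_cuspBarrier (hx : 0 < p.1) : DifferentiableAt ℝ (cuspBarrier α) p := by
  have hg : ∀ c, DifferentiableAt ℝ (fun q : ℝ × ℝ => q.1 ^ α * exp (c / q.1 ^ α)) p := fun c =>
    (hasDerivAt_rpow_mul_exp_div_rpow c hx).differentiableAt.comp p differentiableAt_fst
  exact (hg (-1)).add ((hg 1).mul (differentiableAt_snd.pow 2))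

theorem fderiv_cuspBarrier_one_zero (hx : 0 < p.1) (hy : |p.2| = 1 / 2 * exp (-1 / p.1 ^ α)) :
    fderiv ℝ (cuspBarrier α) p (1, 0) =
      α * exp (-1 / p.1 ^ α) * (3 / 4 * p.1⁻¹ + 5 / 4 * p.1 ^ (α - 1)) := by
  rw [fderiv_apply_one_zero_of_hasDerivAt (differentiableAt_cuspBarrier hx)
    (hasDerivAt_cuspBarrier_fst hx), ← sq_abs p.2, hy, neg_div, exp_neg]
  field_simp
  ring

theorem cuspBarrier_lt (hx : 0 < p.1) (hy : |p.2| < 1 / 2 * exp (-1 / p.1 ^ α)) :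
    cuspBarrier α p < 5 / 4 * (p.1 ^ α * exp (-1 / p.1 ^ α)) := by
  have hy2 : p.2 ^ 2 < 1 / 4 * exp (-1 / p.1 ^ α) ^ 2 := by
    rw [← sq_abs]; nlinarith [abs_nonneg p.2]
  calc cuspBarrier α p
      < p.1 ^ α * exp (-1 / p.1 ^ α) +
          p.1 ^ α * exp (1 / p.1 ^ α) * (1 / 4 * exp (-1 / p.1 ^ α) ^ 2) := by
        unfold cuspBarrier; gcongr
    _ = 5 / 4 * (p.1 ^ α * exp (-1 / p.1 ^ α)) := by
        rw [neg_div, exp_neg]; field_simp; ring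
end

theorem mul_exp_neg_inv_le_mul_exp_neg_inv {s t : ℝ} (hs : 0 < s) (hst : s ≤ t) :
    s * exp (-1 / s) ≤ t * exp (-1 / t) := by
  have hexp : exp (-1 / s) ≤ exp (-1 / t) := by
    rw [exp_le_exp, neg_div, neg_div, neg_le_neg_iff]
    exact one_div_le_one_div_of_le hs hst
  exact mul_le_mul hst hexp (exp_pos _).le (hs.le.trans hst)

theorem rpow_mul_exp_neg_inv_rpow_le {α x : ℝ} (hα : 0 < α) (hx : 0 < x) (hx2 : x ≤ 1 / 2) :
    x ^ α * exp (-1 / x ^ α) ≤ 2 ^ (-α) * exp (-2 ^ α) := by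
  have hxα : x ^ α ≤ 2 ^ (-α) := by
    rw [rpow_neg zero_le_two, ← inv_rpow zero_le_two, ← one_div]
    exact rpow_le_rpow hx.le hx2 hα.le
  have h := mul_exp_neg_inv_le_mul_exp_neg_inv (rpow_pos_of_pos hx α) hxα
  rwa [rpow_neg zero_le_two, div_inv_eq_mul, neg_one_mul, ← rpow_neg zero_le_two] at h

/-- for B(x₁,x₂) = x₁^α e^{−1/x₁^α} + x₁^α e^{1/x₁^α}x₂² (the inner
expression of the barrier b_α), on the boundary of the cusp
{|x₂| = ½e^{−1/x₁^α}, x₁ > 0} the x₁-derivative computed from inside equals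
α e^{−1/x₁^α}((3/4)x₁^{−1} + (5/4)x₁^{α−1}) ≥ 0; moreover
b_α < (5/4)2^{−α}e^{−2^α} in Ω_{1,α} ∩ Ω. -/
theorem stmt_18 (α : ℝ) (hα : 0 < α)
    (B : ℝ × ℝ → ℝ)
    (hB : ∀ p : ℝ × ℝ, B p =
      p.1 ^ α * Real.exp (-1 / p.1 ^ α) + p.1 ^ α * Real.exp (1 / p.1 ^ α) * p.2 ^ 2) :
    (∀ p : ℝ × ℝ, 0 < p.1 → |p.2| = (1 / 2) * Real.exp (-1 / p.1 ^ α) →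
      fderiv ℝ B p (1, 0) =
          α * Real.exp (-1 / p.1 ^ α) * ((3 / 4) * p.1⁻¹ + (5 / 4) * p.1 ^ (α - 1)) ∧
        0 ≤ fderiv ℝ B p (1, 0)) ∧
    (∀ p : ℝ × ℝ, 0 < p.1 → p.1 ≤ 1 / 2 → |p.2| < (1 / 2) * Real.exp (-1 / p.1 ^ α) →
      B p < (5 / 4) * (2 : ℝ) ^ (-α) * Real.exp (-(2 : ℝ) ^ α)) := by
  obtain rfl : B = cuspBarrier α := funext hB
  refine ⟨fun p hx hy => ?_, fun p hx hx2 hy => ?_⟩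
  · rw [fderiv_cuspBarrier_one_zero hx hy]
    exact ⟨rfl, by positivity⟩
  · calc cuspBarrier α p < 5 / 4 * (p.1 ^ α * exp (-1 / p.1 ^ α)) := cuspBarrier_lt hx hy
      _ ≤ 5 / 4 * (2 ^ (-α) * exp (-2 ^ α)) :=
          mul_le_mul_of_nonneg_left (rpow_mul_exp_neg_inv_rpow_le hα hx hx2) (by norm_num)
      _ = 5 / 4 * 2 ^ (-α) * exp (-2 ^ α) := by ring
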